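/- Let R be an n × n^{m−1} column-stochastic matrix, v a stochastic vector in ℝⁿ, and 0 ≤ α < 1/(m−1). Then there is at most one stochastic vector x ∈ ℝⁿ satisfying x = α R (x ⊗ ⋯ ⊗ x) + (1 − α) v, where the Kronecker product has m−1 factors. -/

import Mathlib

open Finset Matrix

def StochVec {α : Type*} [Fintype α] (x : α → ℝ) : Prop :=
  (∀ i, 0 ≤ x i) ∧ ∑ i, x i = 1

def norm1 {α : Type*} [Fintype α] (x : α → ℝ) : ℝ := ∑ i, |x i|

def kron {α β : Type*} (a : α → ℝ) (b : β → ℝ) : α × β → ℝ := fun p => a p.1 * b p.2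

def kpow {n : ℕ} (x : Fin n → ℝ) (k : ℕ) : (Fin k → Fin n) → ℝ := fun f => ∏ i, x (f i)

def ColStoch {α β : Type*} [Fintype α] (R : Matrix α β ℝ) : Prop :=
  (∀ i j, 0 ≤ R i j) ∧ ∀ j, ∑ i, R i j = 1

/-!
Both solutions are fixed points of `z ↦ α R (z ⊗ ⋯ ⊗ z) + (1 - α) v`. In the ℓ¹ norm a
column-stochastic matrix is non-expansive, and on the ℓ¹ unit ball `z ↦ z ⊗ ⋯ ⊗ z` with `k`
factors is `k`-Lipschitz (telescoping one factor at a time). So `‖x - y‖₁ ≤ α (m - 1) ‖x - y‖₁`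
with `α (m - 1) < 1`, forcing `x = y`.
-/

section Norm1

variable {ι κ : Type*} [Fintype ι] [Fintype κ]

lemma norm1_nonneg (x : ι → ℝ) : 0 ≤ norm1 x :=
  sum_nonneg fun i _ => abs_nonneg (x i)

lemma eq_of_norm1_sub_eq_zero {x y : ι → ℝ} (h : norm1 (x - y) = 0) : x = y := by
  funext i
  have hi := (sum_eq_zero_iff_of_nonneg fun j _ => abs_nonneg ((x - y) j)).mp h i (mem_univ i)
  simpa [sub_eq_zero] using hi

lemma norm1_smul (c : ℝ) (x : ι → ℝ) : norm1 (c • x) = |c| * norm1 x := by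
  simp only [norm1, Pi.smul_apply, smul_eq_mul, abs_mul, mul_sum]

lemma norm1_comp_equiv (e : κ ≃ ι) (x : ι → ℝ) : norm1 (x ∘ e) = norm1 x :=
  e.sum_comp fun i => |x i|

lemma StochVec.norm1_eq_one {x : ι → ℝ} (hx : StochVec x) : norm1 x = 1 := by
  rw [norm1, ← hx.2]
  exact sum_congr rfl fun i _ => abs_of_nonneg (hx.1 i)

lemma norm1_kron (a : ι → ℝ) (b : κ → ℝ) : norm1 (kron a b) = norm1 a * norm1 b := by
  simp only [norm1, kron, abs_mul, Fintype.sum_prod_type, sum_mul_sum]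

lemma norm1_kron_sub_kron_le (a c : ι → ℝ) (b d : κ → ℝ) :
    norm1 (kron a b - kron c d) ≤ norm1 a * norm1 (b - d) + norm1 (a - c) * norm1 d := by
  have hpoint : ∀ i j, |a i * b j - c i * d j| ≤ |a i| * |b j - d j| + |a i - c i| * |d j| :=
    fun i j => calc
      |a i * b j - c i * d j| = |a i * (b j - d j) + (a i - c i) * d j| := by ring_nf
      _ ≤ |a i| * |b j - d j| + |a i - c i| * |d j| := by
        rw [← abs_mul, ← abs_mul]; exact abs_add_le _ _
  calc norm1 (kron a b - kron c d)
      ≤ ∑ i, ∑ j, (|a i| * |b j - d j| + |a i - c i| * |d j|) := by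
        simp only [norm1, kron, Pi.sub_apply, Fintype.sum_prod_type]
        exact sum_le_sum fun i _ => sum_le_sum fun j _ => hpoint i j
    _ = norm1 a * norm1 (b - d) + norm1 (a - c) * norm1 d := by
        simp only [norm1, Pi.sub_apply, sum_add_distrib, sum_mul_sum]

lemma ColStoch.norm1_mulVec_le {R : Matrix ι κ ℝ} (hR : ColStoch R) (z : κ → ℝ) :
    norm1 (R *ᵥ z) ≤ norm1 z :=
  calc norm1 (R *ᵥ z) ≤ ∑ i, ∑ j, R i j * |z j| := by
        refine sum_le_sum fun i _ => (abs_sum_le_sum_abs _ _).trans_eq ?_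
        exact sum_congr rfl fun j _ => by rw [abs_mul, abs_of_nonneg (hR.1 i j)]
    _ = norm1 z := by
        rw [sum_comm]
        exact sum_congr rfl fun j _ => by rw [← sum_mul, hR.2 j, one_mul]

end Norm1

section Kpow

variable {n : ℕ}

lemma kpow_succ_comp_consEquiv (x : Fin n → ℝ) (k : ℕ) :
    kpow x (k + 1) ∘ Fin.consEquiv (fun _ => Fin n) = kron x (kpow x k) := by
  funext p
  simp [kpow, kron, Fin.prod_univ_succ]

lemma norm1_kpow (x : Fin n → ℝ) (k : ℕ) : norm1 (kpow x k) = norm1 x ^ k := by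
  induction k with
  | zero => simp [norm1, kpow]
  | succ k ih =>
    rw [← norm1_comp_equiv (Fin.consEquiv fun _ => Fin n), kpow_succ_comp_consEquiv,
      norm1_kron, ih, pow_succ']

lemma norm1_kpow_sub_kpow_le {x y : Fin n → ℝ} (hx : norm1 x ≤ 1) (hy : norm1 y ≤ 1) (k : ℕ) :
    norm1 (kpow x k - kpow y k) ≤ k * norm1 (x - y) := by
  induction k with
  | zero => simp [norm1, kpow]
  | succ k ih =>
    have hyk : norm1 (kpow y k) ≤ 1 := by
      rw [norm1_kpow]; exact pow_le_one₀ (norm1_nonneg y) hy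
    rw [← norm1_comp_equiv (Fin.consEquiv fun _ => Fin n), Pi.sub_comp,
      kpow_succ_comp_consEquiv, kpow_succ_comp_consEquiv]
    calc norm1 (kron x (kpow x k) - kron y (kpow y k))
        ≤ norm1 x * norm1 (kpow x k - kpow y k) + norm1 (x - y) * norm1 (kpow y k) :=
          norm1_kron_sub_kron_le _ _ _ _
      _ ≤ 1 * (k * norm1 (x - y)) + norm1 (x - y) * 1 := by
          gcongr
          · exact norm1_nonneg _
          · exact norm1_nonneg _
      _ = (k + 1 : ℕ) * norm1 (x - y) := by push_cast; ring

end Kpow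

lemma mul_natCast_pred_lt_one {α : ℝ} {m : ℕ} (hα : α < 1 / ((m : ℝ) - 1)) :
    α * ((m - 1 : ℕ) : ℝ) < 1 := by
  rcases le_or_gt m 1 with hm | hm
  · simp [Nat.sub_eq_zero_of_le hm]
  · have hpos : (0 : ℝ) < (m : ℝ) - 1 := by
      have : (1 : ℝ) < m := by exact_mod_cast hm
      linarith
    rw [Nat.cast_sub hm.le, Nat.cast_one, ← lt_div_iff₀ hpos]
    exact hα

theorem stmt5_general {n m : ℕ}
    (R : Matrix (Fin n) (Fin (m - 1) → Fin n) ℝ) (hR : ColStoch R)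
    (v : Fin n → ℝ)
    (α : ℝ) (hα0 : 0 ≤ α) (hα : α < 1 / ((m : ℝ) - 1))
    (x y : Fin n → ℝ) (hx : StochVec x) (hy : StochVec y)
    (hxe : x = fun i => α * R.mulVec (kpow x (m - 1)) i + (1 - α) * v i)
    (hye : y = fun i => α * R.mulVec (kpow y (m - 1)) i + (1 - α) * v i) :
    x = y := by
  have hsub : x - y = α • R *ᵥ (kpow x (m - 1) - kpow y (m - 1)) := by
    conv_lhs => rw [hxe, hye]
    funext i
    simp only [Pi.sub_apply, Pi.smul_apply, smul_eq_mul, mulVec_sub]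
    ring
  have hcontract : norm1 (x - y) ≤ α * ((m - 1 : ℕ) * norm1 (x - y)) :=
    calc norm1 (x - y) = α * norm1 (R *ᵥ (kpow x (m - 1) - kpow y (m - 1))) := by
          rw [hsub, norm1_smul, abs_of_nonneg hα0]
      _ ≤ α * norm1 (kpow x (m - 1) - kpow y (m - 1)) := by
          gcongr; exact hR.norm1_mulVec_le _
      _ ≤ α * ((m - 1 : ℕ) * norm1 (x - y)) := by
          gcongr
          exact norm1_kpow_sub_kpow_le hx.norm1_eq_one.le hy.norm1_eq_one.le _
  have hlt := mul_natCast_pred_lt_one hα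
  have hnonneg := norm1_nonneg (x - y)
  exact eq_of_norm1_sub_eq_zero (by nlinarith)

theorem stmt5 {n m : ℕ} (hm : 2 ≤ m)
    (R : Matrix (Fin n) (Fin (m - 1) → Fin n) ℝ) (hR : ColStoch R)
    (v : Fin n → ℝ) (hv : StochVec v)
    (α : ℝ) (hα0 : 0 ≤ α) (hα : α < 1 / ((m : ℝ) - 1))
    (x y : Fin n → ℝ) (hx : StochVec x) (hy : StochVec y)
    (hxe : x = fun i => α * R.mulVec (kpow x (m - 1)) i + (1 - α) * v i)
    (hye : y = fun i => α * R.mulVec (kpow y (m - 1)) i + (1 - α) * v i) :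
    x = y :=
  stmt5_general R hR v α hα0 hα x y hx hy hxe hye
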